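/- Let α, β, L ∈ ℝ with α > 0, β > 0, L > 0, and let ω ∈ ℝ be arbitrary. Then every solution of the planar system ẋ = β·sin θ, θ̇ = ω − L·x − L·α·sin θ converges to an equilibrium: if differentiable x, θ : [0, ∞) → ℝ satisfy the system for all t ≥ 0, then there exists k ∈ ℤ such that x(t) → ω/L and θ(t) → kπ as t → ∞. In particular, the system is globally asymptotically stable for every frequency deviation ω, i.e. the pull-in range of this PLL is infinite. -/

import Mathlib

open Filter Set Real Topology

/-!
Along trajectories the Lyapunov function `V` satisfies `V̇ = -αβ sin² θ ≤ 0`, so `V` converges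
and `x` stays bounded; hence `θ̇` is bounded, and `V̇` and `θ̇`, whose own derivatives are then
bounded, are uniformly continuous. Barbalat's lemma replaces the invariance principle and is used
twice. Since `V` converges, `V̇ → 0`, i.e. `sin θ → 0`; a continuous `θ` with `|sin θ| < 1` cannot
leave a strip `|θ - kπ| < π/2`, so `θ → kπ`. Since `θ` converges, `θ̇ → 0`, and then
`L x = ω - θ̇ - Lα sin θ → ω`.
-/

theorem Convex.uniformContinuousOn_of_norm_hasDerivWithin_le {E : Type*}
    [NormedAddCommGroup E] [NormedSpace ℝ E] {f f' : ℝ → E} {s : Set ℝ} {C : ℝ}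
    (hs : Convex ℝ s) (hf : ∀ t ∈ s, HasDerivWithinAt f (f' t) s t)
    (hC : ∀ t ∈ s, ‖f' t‖ ≤ C) : UniformContinuousOn f s :=
  (hs.lipschitzOnWith_of_nnnorm_hasDerivWithin_le (C := C.toNNReal) hf fun t ht => by
    rw [← NNReal.coe_le_coe, coe_nnnorm]
    exact (hC t ht).trans (Real.le_coe_toNNReal C)).uniformContinuousOn

/-- Barbalat's lemma. -/
theorem tendsto_zero_of_hasDerivWithinAt_of_tendsto {f f' : ℝ → ℝ} {a l : ℝ}
    (hf : ∀ t ∈ Ici a, HasDerivWithinAt f (f' t) (Ici a) t)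
    (hf' : UniformContinuousOn f' (Ici a)) (hl : Tendsto f atTop (𝓝 l)) :
    Tendsto f' atTop (𝓝 0) := by
  rw [Metric.tendsto_atTop]
  intro ε hε
  obtain ⟨δ, hδ, hclose⟩ := Metric.uniformContinuousOn_iff.mp hf' (ε / 2) (half_pos hε)
  obtain ⟨h, hh, hhδ⟩ : ∃ h, 0 < h ∧ h < δ := ⟨δ / 2, half_pos hδ, half_lt_self hδ⟩
  have hincr : Tendsto (fun t => f (t + h) - f t) atTop (𝓝 0) := by
    simpa using (hl.comp (tendsto_atTop_add_const_right _ h tendsto_id)).sub hl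
  obtain ⟨N, hN⟩ := Metric.tendsto_atTop.mp hincr (h * (ε / 2)) (by positivity)
  refine ⟨max N a, fun t ht => ?_⟩
  have hta : a ≤ t := le_of_max_le_right ht
  have hcont : ContinuousOn f (Icc t (t + h)) := fun s hs =>
    ((hf s (hta.trans hs.1)).continuousWithinAt).mono fun u hu => hta.trans hu.1
  -- mean value theorem: the slope of `f` over `[t, t + h]` is small and is a value of `f'`
  obtain ⟨ξ, hξ, hslope⟩ := exists_hasDerivAt_eq_slope f f' (lt_add_of_pos_right t hh) hcont
    fun s hs => (hf s (hta.trans hs.1.le)).hasDerivAt (Ici_mem_nhds (hta.trans_lt hs.1))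
  have hξsmall : |f' ξ| < ε / 2 := by
    rw [hslope, add_sub_cancel_left, abs_div, abs_of_pos hh, div_lt_iff₀ hh, mul_comm]
    simpa [Real.dist_eq] using hN t (le_of_max_le_left ht)
  have htξ : dist (f' t) (f' ξ) < ε / 2 := hclose t hta ξ (hta.trans hξ.1.le) (by
    rw [Real.dist_eq, abs_sub_comm, abs_of_pos (sub_pos.2 hξ.1)]
    linarith [hξ.2])
  rw [Real.dist_eq] at htξ ⊢
  rw [sub_zero]
  linarith [abs_sub_abs_le_abs_sub (f' t) (f' ξ)]

theorem AntitoneOn.exists_tendsto_atTop {α : Type*} [ConditionallyCompleteLinearOrder α]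
    [TopologicalSpace α] [OrderTopology α] {f : ℝ → α} {a : ℝ} (hf : AntitoneOn f (Ici a))
    (hb : BddBelow (f '' Ici a)) : ∃ l, Tendsto f atTop (𝓝 l) := by
  have hanti : Antitone fun t => f (max t a) := fun s t hst =>
    hf (le_max_right s a) (le_max_right t a) (max_le_max hst le_rfl)
  refine ⟨_, (tendsto_atTop_ciInf hanti ?_).congr' ?_⟩
  · exact hb.mono (range_subset_iff.2 fun t => mem_image_of_mem f (le_max_right t a))
  · filter_upwards [eventually_ge_atTop a] with t ht
    rw [max_eq_left ht]

theorem abs_sin_sub_int_mul_pi (y : ℝ) (k : ℤ) : |sin (y - k * π)| = |sin y| := by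
  rw [sin_sub_int_mul_pi, abs_mul, abs_neg_one_zpow, one_mul]

theorem abs_le_pi_div_two_mul_abs_sin {z : ℝ} (hz : |z| ≤ π / 2) : |z| ≤ π / 2 * |sin z| :=
  calc |z| = π / 2 * (2 / π * |z|) := by field_simp
    _ ≤ π / 2 * |sin z| := by gcongr; exact mul_abs_le_abs_sin hz

theorem abs_sub_int_mul_pi_le_pi_div_two_mul_abs_sin {y : ℝ} {k : ℤ} (h : |y - k * π| ≤ π / 2) :
    |y - k * π| ≤ π / 2 * |sin y| := by
  simpa only [abs_sin_sub_int_mul_pi] using abs_le_pi_div_two_mul_abs_sin h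

theorem abs_sub_round_div_pi_mul_pi_le (y : ℝ) : |y - round (y / π) * π| ≤ π / 2 := by
  have hy : y - round (y / π) * π = (y / π - round (y / π)) * π := by field_simp
  rw [hy, abs_mul, abs_of_pos pi_pos]
  nlinarith [abs_sub_round (y / π), pi_pos]

theorem abs_sub_int_mul_pi_lt_of_abs_sin_lt_one {y : ℝ} {k : ℤ} (hy : |sin y| < 1)
    (h : |y - k * π| ≤ π / 2) : |y - k * π| < π / 2 := by
  refine h.lt_of_ne fun heq => ?_
  have := abs_sub_int_mul_pi_le_pi_div_two_mul_abs_sin h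
  rw [heq] at this
  nlinarith [pi_pos]

theorem abs_sub_int_mul_pi_lt_of_forall_abs_sin_lt_one {θ : ℝ → ℝ} {a : ℝ} {k : ℤ}
    (hθ : ContinuousOn θ (Ici a)) (hsin : ∀ t ∈ Ici a, |sin (θ t)| < 1)
    (ha : |θ a - k * π| < π / 2) : ∀ t ∈ Ici a, |θ t - k * π| < π / 2 := by
  intro t ht
  by_contra! hfar
  have hcont : ContinuousOn (fun s => |θ s - k * π|) (Icc a t) :=
    ((hθ.mono Icc_subset_Ici_self).sub continuousOn_const).abs
  obtain ⟨s, hs, hθs⟩ := intermediate_value_Icc ht hcont ⟨ha.le, hfar⟩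
  exact (abs_sub_int_mul_pi_lt_of_abs_sin_lt_one (hsin s hs.1) hθs.le).ne hθs

theorem exists_tendsto_int_mul_pi_of_tendsto_sin {θ : ℝ → ℝ} {a : ℝ}
    (hθ : ContinuousOn θ (Ici a)) (hsin : Tendsto (fun t => sin (θ t)) atTop (𝓝 0)) :
    ∃ k : ℤ, Tendsto θ atTop (𝓝 (k * π)) := by
  obtain ⟨T, hT⟩ := eventually_atTop.mp
    (hsin.abs.eventually (gt_mem_nhds (by norm_num : |(0 : ℝ)| < 1)))
  set T' := max T a
  have hsin_lt : ∀ t ∈ Ici T', |sin (θ t)| < 1 := fun t ht => hT t (le_of_max_le_left ht)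
  refine ⟨round (θ T' / π), ?_⟩
  have htrap := abs_sub_int_mul_pi_lt_of_forall_abs_sin_lt_one
    (hθ.mono (Ici_subset_Ici.2 (le_max_right T a))) hsin_lt
    (abs_sub_int_mul_pi_lt_of_abs_sin_lt_one (hsin_lt T' self_mem_Ici)
      (abs_sub_round_div_pi_mul_pi_le (θ T')))
  rw [tendsto_iff_dist_tendsto_zero]
  refine squeeze_zero' (Eventually.of_forall fun t => dist_nonneg) ?_
    (by simpa using (hsin.abs.const_mul (π / 2)))
  filter_upwards [eventually_ge_atTop T'] with t ht
  exact abs_sub_int_mul_pi_le_pi_div_two_mul_abs_sin (htrap t ht).le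

/-- The function `(x - ω/L)²/2 + (2β/L) sin²(θ/2)` of the paper, using `2 sin²(θ/2) = 1 - cos θ`. -/
noncomputable def pllLyapunov (β L ω x θ : ℝ) : ℝ := (x - ω / L) ^ 2 / 2 + β / L * (1 - cos θ)

theorem sq_sub_le_two_mul_pllLyapunov {β L ω : ℝ} (h : 0 ≤ β / L) (x θ : ℝ) :
    (x - ω / L) ^ 2 ≤ 2 * pllLyapunov β L ω x θ := by
  unfold pllLyapunov
  nlinarith [mul_nonneg h (sub_nonneg.2 (cos_le_one θ))]

theorem pllLyapunov_nonneg {β L ω : ℝ} (h : 0 ≤ β / L) (x θ : ℝ) :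
    0 ≤ pllLyapunov β L ω x θ := by
  linarith [sq_nonneg (x - ω / L), sq_sub_le_two_mul_pllLyapunov (ω := ω) h x θ]

section Trajectory

variable {α β L ω : ℝ} {x θ : ℝ → ℝ}

theorem hasDerivWithinAt_pllLyapunov {s : Set ℝ} {t : ℝ} (hL : L ≠ 0)
    (hx : HasDerivWithinAt x (β * sin (θ t)) s t)
    (hθ : HasDerivWithinAt θ (ω - L * x t - L * α * sin (θ t)) s t) :
    HasDerivWithinAt (fun t => pllLyapunov β L ω (x t) (θ t)) (-(α * β) * sin (θ t) ^ 2) s t := by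
  unfold pllLyapunov
  refine ((((hx.sub_const (ω / L)).fun_pow 2).div_const 2).add
    ((hθ.cos.const_sub 1).const_mul (β / L))).congr_deriv ?_
  simp only [Nat.cast_ofNat, Nat.add_one_sub_one, pow_one]
  field_simp
  ring

theorem antitoneOn_pllLyapunov (hα : 0 ≤ α) (hβ : 0 ≤ β) (hL : L ≠ 0)
    (hx : ∀ t ∈ Ici (0 : ℝ), HasDerivWithinAt x (β * sin (θ t)) (Ici 0) t)
    (hθ : ∀ t ∈ Ici (0 : ℝ),
      HasDerivWithinAt θ (ω - L * x t - L * α * sin (θ t)) (Ici 0) t) :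
    AntitoneOn (fun t => pllLyapunov β L ω (x t) (θ t)) (Ici 0) := by
  have hV t (ht : t ∈ Ici (0 : ℝ)) := hasDerivWithinAt_pllLyapunov hL (hx t ht) (hθ t ht)
  refine antitoneOn_of_hasDerivWithinAt_nonpos (f' := fun t => -(α * β) * sin (θ t) ^ 2)
    (convex_Ici 0)
    (fun t ht => (hV t ht).continuousWithinAt) (fun t ht => ?_) fun t _ => ?_
  · exact (hV t (interior_subset ht)).mono interior_subset
  · exact mul_nonpos_of_nonpos_of_nonneg (neg_nonpos.2 (mul_nonneg hα hβ)) (sq_nonneg _)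

theorem exists_abs_deriv_phase_le (hα : 0 ≤ α) (hβ : 0 ≤ β) (hL : 0 < L)
    (hx : ∀ t ∈ Ici (0 : ℝ), HasDerivWithinAt x (β * sin (θ t)) (Ici 0) t)
    (hθ : ∀ t ∈ Ici (0 : ℝ),
      HasDerivWithinAt θ (ω - L * x t - L * α * sin (θ t)) (Ici 0) t) :
    ∃ F, ∀ t ∈ Ici (0 : ℝ), |ω - L * x t - L * α * sin (θ t)| ≤ F := by
  set V := fun t => pllLyapunov β L ω (x t) (θ t)
  refine ⟨L * √(2 * V 0) + L * α, fun t ht => ?_⟩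
  have hxB : |x t - ω / L| ≤ √(2 * V 0) := abs_le_sqrt <|
    (sq_sub_le_two_mul_pllLyapunov (div_nonneg hβ hL.le) _ _).trans <| by
      linarith [antitoneOn_pllLyapunov hα hβ hL.ne' hx hθ self_mem_Ici ht ht]
  have hrate : ω - L * x t - L * α * sin (θ t) = -(L * (x t - ω / L) + L * α * sin (θ t)) := by
    field_simp
    ring
  rw [hrate, abs_neg]
  calc _ ≤ |L * (x t - ω / L)| + |L * α * sin (θ t)| := abs_add_le _ _
    _ = L * |x t - ω / L| + L * α * |sin (θ t)| := by
      rw [abs_mul, abs_mul, abs_mul, abs_of_pos hL, abs_of_nonneg hα]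
    _ ≤ L * √(2 * V 0) + L * α * 1 := by gcongr; exact abs_sin_le_one _
    _ = _ := by ring

theorem uniformContinuousOn_deriv_pllLyapunov {F : ℝ}
    (hθ : ∀ t ∈ Ici (0 : ℝ),
      HasDerivWithinAt θ (ω - L * x t - L * α * sin (θ t)) (Ici 0) t)
    (hF : ∀ t ∈ Ici (0 : ℝ), |ω - L * x t - L * α * sin (θ t)| ≤ F) :
    UniformContinuousOn (fun t => -(α * β) * sin (θ t) ^ 2) (Ici 0) := by
  refine (convex_Ici 0).uniformContinuousOn_of_norm_hasDerivWithin_le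
    (fun t ht => ((hθ t ht).sin.fun_pow 2).const_mul _) (C := |α| * |β| * (2 * 1 * F))
    fun t ht => ?_
  have hsin : |sin (θ t) ^ (2 - 1)| ≤ 1 := by simpa using abs_sin_le_one (θ t)
  have hrate : |cos (θ t)| * |ω - L * x t - L * α * sin (θ t)| ≤ F :=
    (mul_le_of_le_one_left (abs_nonneg _) (abs_cos_le_one _)).trans (hF t ht)
  simp only [norm_mul, norm_neg, Real.norm_eq_abs, Nat.cast_ofNat, abs_two]
  gcongr |α| * |β| * (2 * ?_ * ?_)

theorem uniformContinuousOn_deriv_phase (hα : 0 ≤ α) (hβ : 0 ≤ β) (hL : 0 ≤ L) {F : ℝ}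
    (hx : ∀ t ∈ Ici (0 : ℝ), HasDerivWithinAt x (β * sin (θ t)) (Ici 0) t)
    (hθ : ∀ t ∈ Ici (0 : ℝ),
      HasDerivWithinAt θ (ω - L * x t - L * α * sin (θ t)) (Ici 0) t)
    (hF : ∀ t ∈ Ici (0 : ℝ), |ω - L * x t - L * α * sin (θ t)| ≤ F) :
    UniformContinuousOn (fun t => ω - L * x t - L * α * sin (θ t)) (Ici 0) := by
  refine (convex_Ici 0).uniformContinuousOn_of_norm_hasDerivWithin_le
    (fun t ht => (((hx t ht).const_mul L).const_sub ω).sub ((hθ t ht).sin.const_mul (L * α)))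
    (C := L * β + L * α * F) fun t ht => ?_
  rw [Real.norm_eq_abs]
  calc _ ≤ |L * (β * sin (θ t))| + |L * α * (cos (θ t) * (ω - L * x t - L * α * sin (θ t)))| :=
        (abs_sub _ _).trans_eq (by rw [abs_neg])
    _ ≤ L * (β * 1) + L * α * (1 * F) := by
      simp only [abs_mul, abs_of_nonneg hL, abs_of_nonneg hβ, abs_of_nonneg hα]
      gcongr
      · exact abs_sin_le_one _
      · exact abs_cos_le_one _
      · exact hF t ht
    _ = _ := by ring

end Trajectory

/-- Global asymptotic stability of the classical PLL with perfect-integrator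
filter `H(s) = (β + αs)/s` for every frequency deviation `ω` (infinite pull-in
range): every solution of `ẋ = β sin θ`, `θ̇ = ω − L x − L α sin θ` on `[0, ∞)`
converges to an equilibrium `(ω/L, kπ)`. -/
theorem pll_perfect_integrator_global_stability (α β L ω : ℝ)
    (hα : 0 < α) (hβ : 0 < β) (hL : 0 < L) (x θ : ℝ → ℝ)
    (hx : ∀ t ∈ Set.Ici (0 : ℝ),
      HasDerivWithinAt x (β * Real.sin (θ t)) (Set.Ici (0 : ℝ)) t)
    (hθ : ∀ t ∈ Set.Ici (0 : ℝ),
      HasDerivWithinAt θ (ω - L * x t - L * α * Real.sin (θ t))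
        (Set.Ici (0 : ℝ)) t) :
    ∃ k : ℤ, Tendsto x atTop (nhds (ω / L)) ∧
      Tendsto θ atTop (nhds ((k : ℝ) * Real.pi)) := by
  have hV t (ht : t ∈ Ici (0 : ℝ)) := hasDerivWithinAt_pllLyapunov hL.ne' (hx t ht) (hθ t ht)
  obtain ⟨v, hVv⟩ := (antitoneOn_pllLyapunov hα.le hβ.le hL.ne' hx hθ).exists_tendsto_atTop
    ⟨0, forall_mem_image.2 fun t _ => pllLyapunov_nonneg (div_nonneg hβ.le hL.le) _ _⟩
  obtain ⟨F, hF⟩ := exists_abs_deriv_phase_le hα.le hβ.le hL hx hθ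
  have hsin : Tendsto (fun t => sin (θ t)) atTop (𝓝 0) := by
    have hdecay := (tendsto_zero_of_hasDerivWithinAt_of_tendsto hV
      (uniformContinuousOn_deriv_pllLyapunov hθ hF) hVv).const_mul (-(α * β))⁻¹
    have hsq : Tendsto (fun t => sin (θ t) ^ 2) atTop (𝓝 0) := by
      rw [mul_zero] at hdecay
      refine hdecay.congr fun t => ?_
      field_simp
    have habs : Tendsto (fun t => |sin (θ t)|) atTop (𝓝 0) := by
      simpa only [sqrt_sq_eq_abs, sqrt_zero] using hsq.sqrt
    exact (tendsto_zero_iff_abs_tendsto_zero _).2 habs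
  obtain ⟨k, hk⟩ := exists_tendsto_int_mul_pi_of_tendsto_sin
    (fun t ht => (hθ t ht).continuousWithinAt) hsin
  have hrate := tendsto_zero_of_hasDerivWithinAt_of_tendsto hθ
    (uniformContinuousOn_deriv_phase hα.le hβ.le hL.le hx hθ hF) hk
  refine ⟨k, ?_, hk⟩
  have hlim : Tendsto (fun t => (ω - (ω - L * x t - L * α * sin (θ t)) - L * α * sin (θ t)) / L)
      atTop (𝓝 (ω / L)) := by
    simpa using ((tendsto_const_nhds.sub hrate).sub (hsin.const_mul (L * α))).div_const L
  refine hlim.congr fun t => ?_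
  field_simp
  ring
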